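/- arXiv:1910.14009 — 4 statements merged into one kernel-verified Lean document; each statement's English description precedes it below -/
import Mathlib

section
/- Let z be the standard Gaussian measure on ℝ and let μ ∈ [-1, 1]. Then the polynomial ξ(t) = 1 + μt + (1/2)(√(1-μ²) - 1)(1 - t²) is nonnegative on all of ℝ, satisfies ∫ ξ(t) dz(t) = 1 and ∫ t ξ(t) dz(t) = μ, and minimizes ∫ ξ(t)² dz(t) among all polynomials of degree at most 2 that are nonnegative on ℝ and satisfy these two moment constraints. -/
/-!
Integrating by parts against the centred Gaussian density `φ`, whose derivative is `-(x / v) φ`,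
gives `∫ x^(n+2) = v (n+1) ∫ x^n`, hence the standard moments `0, 1, 0, 3`. For `q = a + b t + c t²`
the constraints then read `a + c = 1`, `b = μ`, and `∫ q² = (a + c)² + b² + 2c² = 1 + μ² + 2c²`.
Nonnegativity of `q` forces `μ² ≤ 4 (1 - c) c`, i.e. `|1 - 2c| ≤ √(1 - μ²)`, so `c` is at least
`(1 - √(1 - μ²)) / 2`, the `t²`-coefficient of `ξ`; and `ξ ≥ 0` because its discriminant vanishes.
-/

open MeasureTheory ProbabilityTheory Real NNReal

section Quadratic

variable {K : Type*} [Field K] [LinearOrder K] [IsStrictOrderedRing K] {a b c : K}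

lemma sq_le_four_mul_of_forall_quadratic_nonneg (h : ∀ t, 0 ≤ a + b * t + c * t ^ 2) :
    b ^ 2 ≤ 4 * a * c := by
  have := discrim_le_zero fun t =>
    (h t).trans_eq (by ring : a + b * t + c * t ^ 2 = c * (t * t) + b * t + a)
  rw [discrim] at this
  linarith

lemma quadratic_nonneg_of_sq_le_four_mul (ha : 0 < a) (h : b ^ 2 ≤ 4 * a * c) (t : K) :
    0 ≤ a + b * t + c * t ^ 2 := by
  refine nonneg_of_mul_nonneg_right (a := 4 * a) ?_ (by positivity)
  rw [show 4 * a * (a + b * t + c * t ^ 2) = (2 * a + b * t) ^ 2 + (4 * a * c - b ^ 2) * t ^ 2 by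
    ring]
  have : 0 ≤ 4 * a * c - b ^ 2 := by linarith
  positivity

end Quadratic

lemma one_sub_sqrt_one_sub_sq_div_two_le {μ c : ℝ} (h : μ ^ 2 ≤ 4 * (1 - c) * c) :
    (1 - √(1 - μ ^ 2)) / 2 ≤ c := by
  have : |1 - 2 * c| ≤ √(1 - μ ^ 2) := Real.abs_le_sqrt (by nlinarith)
  linarith [le_abs_self (1 - 2 * c)]

section GaussianMoments

lemma hasDerivAt_gaussianPDFReal_zero (v : ℝ≥0) (x : ℝ) :
    HasDerivAt (gaussianPDFReal 0 v) (-(x / v) * gaussianPDFReal 0 v x) x := by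
  have h : HasDerivAt (fun x : ℝ => -(x - 0) ^ 2 / (2 * v)) (-(x / v)) x := by
    simpa using ((hasDerivAt_pow 2 x).neg.div_const (2 * (v : ℝ))).congr_deriv (by ring)
  rw [gaussianPDFReal_def]
  exact ((h.exp).const_mul _).congr_deriv (by ring)

lemma integrable_pow_gaussianReal (μ : ℝ) (v : ℝ≥0) (n : ℕ) :
    Integrable (fun x => x ^ n) (gaussianReal μ v) := by
  have := (memLp_id_gaussianReal (μ := μ) (v := v) n).integrable_norm_pow'
  exact (integrable_norm_iff (by fun_prop)).1 (by simpa [norm_pow] using this)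

lemma integrable_mul_gaussianPDFReal {μ : ℝ} {v : ℝ≥0} (hv : v ≠ 0) {g : ℝ → ℝ}
    (hg : Integrable g (gaussianReal μ v)) :
    Integrable (fun x => g x * gaussianPDFReal μ v x) := by
  rw [gaussianReal_of_var_ne_zero _ hv, integrable_withDensity_iff (measurable_gaussianPDF _ _)
    (ae_of_all _ fun _ => gaussianPDF_lt_top)] at hg
  simpa [gaussianPDF, ENNReal.toReal_ofReal (gaussianPDFReal_nonneg _ _ _)] using hg

lemma integral_pow_add_two_gaussianReal (v : ℝ≥0) (n : ℕ) :
    ∫ x, x ^ (n + 2) ∂gaussianReal 0 v = v * (n + 1) * ∫ x, x ^ n ∂gaussianReal 0 v := by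
  rcases eq_or_ne v 0 with rfl | hv
  · simp
  set φ := gaussianPDFReal 0 v
  have hint (k : ℕ) : Integrable (fun x => x ^ k * φ x) :=
    integrable_mul_gaussianPDFReal hv (integrable_pow_gaussianReal 0 v k)
  have ibp := integral_mul_deriv_eq_deriv_mul_of_integrable
    (u := fun x => x ^ (n + 1)) (u' := fun x => (n + 1) * x ^ n)
    (v := φ) (v' := fun x => -(x / v) * φ x)
    (fun x _ => by simpa using hasDerivAt_pow (n + 1) x)
    (fun x _ => hasDerivAt_gaussianPDFReal_zero v x)
    ((hint (n + 2)).const_mul (-(v : ℝ)⁻¹) |>.congr (ae_of_all _ fun x => by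
      simp only [Pi.mul_apply]; ring))
    ((hint n).const_mul ((n : ℝ) + 1) |>.congr (ae_of_all _ fun x => by
      simp only [Pi.mul_apply]; ring))
    (hint (n + 1))
  have hdensity (k : ℕ) : ∫ x, x ^ k ∂gaussianReal 0 v = ∫ x, x ^ k * φ x := by
    simp only [integral_gaussianReal_eq_integral_smul hv, smul_eq_mul, mul_comm, φ]
  calc ∫ x, x ^ (n + 2) ∂gaussianReal 0 v
      = -v * ∫ x, x ^ (n + 1) * (-(x / v) * φ x) := by
        rw [hdensity, ← integral_const_mul]
        congr 1 with x
        field_simp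
        ring
    _ = v * (n + 1) * ∫ x, x ^ n ∂gaussianReal 0 v := by
        rw [ibp, hdensity, neg_mul_neg, ← integral_const_mul, ← integral_const_mul]
        congr 1 with x
        ring

variable (v : ℝ≥0)

lemma integral_sq_gaussianReal_zero : ∫ x, x ^ 2 ∂gaussianReal 0 v = v := by
  simpa using integral_pow_add_two_gaussianReal v 0

lemma integral_pow_three_gaussianReal_zero : ∫ x, x ^ 3 ∂gaussianReal 0 v = 0 := by
  simpa using integral_pow_add_two_gaussianReal v 1

lemma integral_pow_four_gaussianReal_zero : ∫ x, x ^ 4 ∂gaussianReal 0 v = 3 * v ^ 2 := by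
  rw [integral_pow_add_two_gaussianReal v 2, integral_sq_gaussianReal_zero]
  ring

lemma integral_quartic_gaussianReal (p₀ p₁ p₂ p₃ p₄ : ℝ) :
    ∫ t, (p₀ + p₁ * t + p₂ * t ^ 2 + p₃ * t ^ 3 + p₄ * t ^ 4) ∂gaussianReal 0 v
      = p₀ + v * p₂ + 3 * v ^ 2 * p₄ := by
  have hp (c : ℝ) (k : ℕ) : Integrable (fun t => c * t ^ k) (gaussianReal 0 v) :=
    (integrable_pow_gaussianReal 0 v k).const_mul c
  have h₁ : Integrable (fun t => p₁ * t) (gaussianReal 0 v) := by simpa using hp p₁ 1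
  have h₀₁ : Integrable (fun t => p₀ + p₁ * t) (gaussianReal 0 v) := (integrable_const p₀).add h₁
  rw [integral_add (by exact (h₀₁.add (hp p₂ 2)).add (hp p₃ 3)) (hp p₄ 4),
    integral_add (by exact h₀₁.add (hp p₂ 2)) (hp p₃ 3), integral_add h₀₁ (hp p₂ 2),
    integral_add (integrable_const p₀) h₁]
  simp only [integral_const, probReal_univ, one_smul, integral_const_mul,
    integral_sq_gaussianReal_zero, integral_pow_three_gaussianReal_zero,
    integral_pow_four_gaussianReal_zero]
  rw [integral_const_mul, integral_id_gaussianReal]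
  ring

variable (a b c : ℝ)

lemma integral_quadratic_gaussianReal :
    ∫ t, (a + b * t + c * t ^ 2) ∂gaussianReal 0 v = a + v * c := by
  calc ∫ t, (a + b * t + c * t ^ 2) ∂gaussianReal 0 v
      = ∫ t, (a + b * t + c * t ^ 2 + 0 * t ^ 3 + 0 * t ^ 4) ∂gaussianReal 0 v := by
        congr 1 with t; ring
    _ = a + v * c := by rw [integral_quartic_gaussianReal]; ring

lemma integral_mul_quadratic_gaussianReal :
    ∫ t, t * (a + b * t + c * t ^ 2) ∂gaussianReal 0 v = v * b := by
  calc ∫ t, t * (a + b * t + c * t ^ 2) ∂gaussianReal 0 v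
      = ∫ t, (0 + a * t + b * t ^ 2 + c * t ^ 3 + 0 * t ^ 4) ∂gaussianReal 0 v := by
        congr 1 with t; ring
    _ = v * b := by rw [integral_quartic_gaussianReal]; ring

lemma integral_quadratic_sq_gaussianReal :
    ∫ t, (a + b * t + c * t ^ 2) ^ 2 ∂gaussianReal 0 v
      = a ^ 2 + v * (b ^ 2 + 2 * a * c) + 3 * v ^ 2 * c ^ 2 := by
  calc ∫ t, (a + b * t + c * t ^ 2) ^ 2 ∂gaussianReal 0 v
      = ∫ t, (a ^ 2 + 2 * a * b * t + (b ^ 2 + 2 * a * c) * t ^ 2 + 2 * b * c * t ^ 3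
          + c ^ 2 * t ^ 4) ∂gaussianReal 0 v := by
        congr 1 with t; ring
    _ = _ := integral_quartic_gaussianReal ..

end GaussianMoments

/-- The explicit nonnegative quadratic PLR tilting the standard
Gaussian to mean `μ ∈ [-1,1]` satisfies the constraints and minimizes the
second moment among all nonnegative quadratics with those constraints. -/
theorem gaussian_tilt_optimal (μ : ℝ) (hμ : μ ∈ Set.Icc (-1 : ℝ) 1)
    (z : Measure ℝ) (hz : z = ProbabilityTheory.gaussianReal 0 1)
    (ξ : ℝ → ℝ)
    (hξ : ∀ t, ξ t = 1 + μ * t + (1 / 2) * (Real.sqrt (1 - μ ^ 2) - 1) * (1 - t ^ 2)) :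
    (∀ t, 0 ≤ ξ t) ∧
    (∫ t, ξ t ∂z) = 1 ∧
    (∫ t, t * ξ t ∂z) = μ ∧
    (∀ a b c : ℝ, (∀ t, 0 ≤ a + b * t + c * t ^ 2) →
      (∫ t, (a + b * t + c * t ^ 2) ∂z) = 1 →
      (∫ t, t * (a + b * t + c * t ^ 2) ∂z) = μ →
      ∫ t, (ξ t) ^ 2 ∂z ≤ ∫ t, (a + b * t + c * t ^ 2) ^ 2 ∂z) := by
  obtain ⟨hμ₁, hμ₂⟩ := hμ
  set s := √(1 - μ ^ 2)
  have hs : s ^ 2 = 1 - μ ^ 2 := Real.sq_sqrt (by nlinarith)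
  have hs₀ : 0 ≤ s := Real.sqrt_nonneg _
  have hs₁ : s ≤ 1 := Real.sqrt_le_one.mpr (by nlinarith)
  obtain rfl : ξ = fun t => (1 + s) / 2 + μ * t + (1 - s) / 2 * t ^ 2 :=
    funext fun t => by rw [hξ]; ring
  subst hz
  refine ⟨quadratic_nonneg_of_sq_le_four_mul (by linarith) (by nlinarith), ?_, ?_, ?_⟩
  · rw [integral_quadratic_gaussianReal, NNReal.coe_one]
    ring
  · rw [integral_mul_quadratic_gaussianReal, NNReal.coe_one, one_mul]
  intro a b c hq hmass hmean
  rw [integral_quadratic_gaussianReal, NNReal.coe_one, one_mul] at hmass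
  rw [integral_mul_quadratic_gaussianReal, NNReal.coe_one, one_mul] at hmean
  subst b
  have hc : (1 - s) / 2 ≤ c := one_sub_sqrt_one_sub_sq_div_two_le <| by
    simpa [show a = 1 - c by linarith] using sq_le_four_mul_of_forall_quadratic_nonneg hq
  have hc_sq : ((1 - s) / 2) ^ 2 ≤ c ^ 2 := pow_le_pow_left₀ (by linarith) hc 2
  simp only [integral_quadratic_sq_gaussianReal, NNReal.coe_one, one_mul, one_pow]
  linear_combination -(a + c + 1) * hmass + 2 * hc_sq
end

section
/- A polynomial ξ of degree at most 2n in one real variable is nonnegative on [0, ∞) if and only if there exist polynomials f (a sum of two squares of polynomials of degree ≤ n) and g (a sum of two squares of polynomials of degree ≤ n-1) such that ξ(t) = f(t) + t·g(t) for all t. -/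
/-!
Substituting `t = x²`, `ξ ≥ 0` on `[0, ∞)` means `ξ(x²) ≥ 0` on `ℝ`. A nonnegative real
polynomial is a product of a nonnegative constant and factors `(x - a)² + b²` (real roots have
even multiplicity), so by the Brahmagupta–Fibonacci identity `ξ(x²) = A(x)² + B(x)²` with
`deg A, deg B ≤ 2n`. Writing `A(x) = E(x²) + x O(x²)` and taking even parts of `A² + B²` gives
`ξ = E_A² + E_B² + t (O_A² + O_B²)`.
-/

open Polynomial

namespace Polynomial

section CommRing

variable {R : Type*} [CommRing R]

-- The paper's `Ω_m`.
def IsSumTwoSqDegLE (m : ℕ) (P : R[X]) : Prop :=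
  ∃ f g : R[X], f.natDegree ≤ m ∧ g.natDegree ≤ m ∧ P = f ^ 2 + g ^ 2

-- Brahmagupta–Fibonacci: `(a² + b²)(c² + d²) = (ac - bd)² + (ad + bc)²`.
theorem IsSumTwoSqDegLE.mul {m k : ℕ} {P Q : R[X]} (hP : IsSumTwoSqDegLE m P)
    (hQ : IsSumTwoSqDegLE k Q) : IsSumTwoSqDegLE (m + k) (P * Q) := by
  obtain ⟨a, b, ha, hb, rfl⟩ := hP
  obtain ⟨c, d, hc, hd, rfl⟩ := hQ
  refine ⟨a * c - b * d, a * d + b * c, ?_, ?_, by ring⟩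
  · exact (natDegree_sub_le _ _).trans
      (max_le (natDegree_mul_le_of_le ha hc) (natDegree_mul_le_of_le hb hd))
  · exact (natDegree_add_le _ _).trans
      (max_le (natDegree_mul_le_of_le ha hd) (natDegree_mul_le_of_le hb hc))

theorem isSumTwoSqDegLE_X_sub_C_sq_add_C_sq (a b : R) :
    IsSumTwoSqDegLE 1 ((X - C a) ^ 2 + C b ^ 2) :=
  ⟨X - C a, C b, natDegree_X_sub_C_le a, natDegree_C b ▸ zero_le_one, rfl⟩

theorem natDegree_contract_le {p : ℕ} (hp : p ≠ 0) (f : R[X]) :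
    (contract p f).natDegree ≤ f.natDegree / p := by
  refine natDegree_le_iff_coeff_eq_zero.mpr fun n hn => ?_
  rw [coeff_contract hp]
  exact coeff_eq_zero_of_natDegree_lt
    ((Nat.div_lt_iff_lt_mul (Nat.pos_of_ne_zero hp)).mp (by exact_mod_cast hn))

theorem natDegree_contract_two_le {f : R[X]} {n : ℕ} (hf : f.natDegree ≤ 2 * n) :
    (contract 2 f).natDegree ≤ n :=
  (natDegree_contract_le two_ne_zero f).trans (by omega)

theorem natDegree_contract_two_divX_le {f : R[X]} {n : ℕ} (hf : f.natDegree ≤ 2 * n) :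
    (contract 2 f.divX).natDegree ≤ n - 1 :=
  (natDegree_contract_le two_ne_zero _).trans (by rw [natDegree_divX_eq_natDegree_tsub_one]; omega)

theorem expand_contract_add_X_mul_expand_contract_divX (f : R[X]) :
    expand R 2 (contract 2 f) + X * expand R 2 (contract 2 f.divX) = f := by
  ext n
  rcases n with _ | n
  · simp [coeff_expand two_pos, coeff_contract]
  · rw [coeff_add, coeff_X_mul, coeff_expand two_pos, coeff_expand two_pos]
    rcases Nat.even_or_odd' n with ⟨k, rfl | rfl⟩
    · simp [coeff_contract, Nat.mul_comm]
    · have h1 : 2 ∣ 2 * k + 1 + 1 := ⟨k + 1, by ring⟩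
      have h2 : ¬ 2 ∣ 2 * k + 1 := by omega
      rw [if_pos h1, if_neg h2, coeff_contract two_ne_zero, add_zero]
      congr 1
      omega

theorem contract_two_X : contract 2 (X : R[X]) = 0 := by
  ext n
  rw [coeff_contract two_ne_zero, coeff_X, coeff_zero, if_neg (by omega)]

theorem contract_two_sq (f : R[X]) :
    contract 2 (f ^ 2) = contract 2 f ^ 2 + X * contract 2 f.divX ^ 2 := by
  set e := contract 2 f
  set o := contract 2 f.divX
  have hsq : f ^ 2 = expand R 2 (e ^ 2 + X * o ^ 2) + X * expand R 2 (2 * e * o) := by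
    rw [← expand_contract_add_X_mul_expand_contract_divX f]
    simp only [map_add, map_mul, map_pow, expand_X, map_ofNat]
    ring
  rw [hsq, contract_add two_ne_zero, contract_expand 2 two_ne_zero,
    contract_mul_expand two_ne_zero, contract_two_X, zero_mul, add_zero]

theorem eq_contract_sq_add_X_mul_contract_divX_sq_of_expand_eq {ξ A B : R[X]}
    (h : expand R 2 ξ = A ^ 2 + B ^ 2) :
    ξ = contract 2 A ^ 2 + contract 2 B ^ 2 +
      X * (contract 2 A.divX ^ 2 + contract 2 B.divX ^ 2) := by
  rw [← contract_expand 2 two_ne_zero (f := ξ), h, contract_add two_ne_zero, contract_two_sq,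
    contract_two_sq]
  ring

end CommRing

theorem natDegree_X_sub_C_sq_add_C_sq (a b : ℝ) : ((X - C a) ^ 2 + C b ^ 2).natDegree = 2 := by
  rw [← C_pow, natDegree_add_C, natDegree_pow, natDegree_X_sub_C]

theorem isSumTwoSqDegLE_C {c : ℝ} (hc : 0 ≤ c) (m : ℕ) : IsSumTwoSqDegLE m (C c) :=
  ⟨C √c, 0, by simp, by simp, by rw [← C_pow, Real.sq_sqrt hc]; simp⟩

theorem nonneg_of_mul_nonneg_of_ne_zero {S Q : ℝ[X]} (hS0 : S ≠ 0) (hS : ∀ x, 0 ≤ S.eval x)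
    (h : ∀ x, 0 ≤ (S * Q).eval x) (x : ℝ) : 0 ≤ Q.eval x := by
  have hdense : Dense {x | S.IsRoot x}ᶜ := (finite_setOfPred_isRoot hS0).countable.dense_compl ℝ
  refine hdense.induction (fun y hy => ?_) (isClosed_le continuous_const Q.continuous) x
  have := h y
  rw [eval_mul] at this
  exact nonneg_of_mul_nonneg_right this ((hS y).lt_of_ne' hy)

theorem sq_X_sub_C_dvd_of_isRoot_of_nonneg {P : ℝ[X]} {r : ℝ} (h : ∀ x, 0 ≤ P.eval x)
    (hr : P.IsRoot r) : (X - C r) ^ 2 ∣ P := by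
  rcases eq_or_ne P 0 with rfl | hP
  · exact dvd_zero _
  have hmin : IsLocalMin (fun x => P.eval x) r :=
    Filter.Eventually.of_forall fun x => by
      simp only [hr.eq_zero, h x]
  have hderiv : P.derivative.IsRoot r := by
    simpa [Polynomial.deriv] using hmin.deriv_eq_zero
  exact (le_rootMultiplicity_iff hP).mp
    ((one_lt_rootMultiplicity_iff_isRoot hP).mpr ⟨hr, hderiv⟩)

theorem exists_X_sub_C_sq_add_C_sq_dvd_of_nonneg {P : ℝ[X]} (hP : 0 < P.degree)
    (h : ∀ x, 0 ≤ P.eval x) : ∃ a b : ℝ, (X - C a) ^ 2 + C b ^ 2 ∣ P := by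
  obtain ⟨z, hz⟩ := Complex.exists_root (f := P.map (algebraMap ℝ ℂ)) (by rwa [degree_map])
  have hz : aeval z P = 0 := by rwa [aeval_def, ← eval_map]
  by_cases him : z.im = 0
  · refine ⟨z.re, 0, ?_⟩
    have hzre : (z.re : ℂ) = z := Complex.ext rfl (by simp [him])
    rw [← hzre, show (z.re : ℂ) = algebraMap ℝ ℂ z.re from rfl,
      aeval_algebraMap_apply_eq_algebraMap_eval] at hz
    simpa using sq_X_sub_C_dvd_of_isRoot_of_nonneg h (by simpa using hz)
  · refine ⟨z.re, z.im, ?_⟩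
    convert P.quadratic_dvd_of_aeval_eq_zero_im_ne_zero hz him using 1
    rw [Complex.sq_norm, Complex.normSq_apply]
    simp only [map_add, map_mul, map_ofNat]
    ring

theorem isSumTwoSqDegLE_of_nonneg {P : ℝ[X]} {k : ℕ} (hdeg : P.natDegree ≤ 2 * k)
    (h : ∀ x, 0 ≤ P.eval x) : IsSumTwoSqDegLE k P := by
  induction hd : P.natDegree using Nat.strong_induction_on generalizing P k with
  | _ d ih =>
  rcases Nat.eq_zero_or_pos d with rfl | hpos
  · rw [eq_C_of_natDegree_eq_zero hd]
    exact isSumTwoSqDegLE_C (by simpa [coeff_zero_eq_eval_zero] using h 0) k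
  obtain ⟨a, b, Q, rfl⟩ := exists_X_sub_C_sq_add_C_sq_dvd_of_nonneg
    (natDegree_pos_iff_degree_pos.mp (hd ▸ hpos)) h
  have hS0 : (X - C a) ^ 2 + C b ^ 2 ≠ 0 :=
    ne_zero_of_natDegree_gt (n := 0) (by rw [natDegree_X_sub_C_sq_add_C_sq]; omega)
  have hQ0 : Q ≠ 0 := by
    rintro rfl
    simp [← hd] at hpos
  have hQdeg : Q.natDegree + 2 = d := by
    rw [← hd, natDegree_mul hS0 hQ0, natDegree_X_sub_C_sq_add_C_sq]; ring
  have hQ := nonneg_of_mul_nonneg_of_ne_zero hS0 (fun x => by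
    simp only [eval_add, eval_pow, eval_sub, eval_X, eval_C]; positivity) h
  have := (isSumTwoSqDegLE_X_sub_C_sq_add_C_sq a b).mul
    (ih Q.natDegree (by omega) (k := k - 1) (by omega) hQ rfl)
  rwa [show 1 + (k - 1) = k by omega] at this

end Polynomial

/-- A univariate real polynomial of degree ≤ 2n is nonnegative on
[0,∞) iff ξ(t) = f(t) + t·g(t) where f is a sum of two squares of degree-≤n
polynomials and g a sum of two squares of degree-≤(n-1) polynomials. -/
theorem nonneg_halfline_even (n : ℕ) (ξ : Polynomial ℝ)
    (hdeg : ξ.natDegree ≤ 2 * n) :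
    (∀ t : ℝ, 0 ≤ t → 0 ≤ ξ.eval t) ↔
      ∃ p q r s : Polynomial ℝ,
        p.natDegree ≤ n ∧ q.natDegree ≤ n ∧
        r.natDegree ≤ n - 1 ∧ s.natDegree ≤ n - 1 ∧
        ∀ t : ℝ, ξ.eval t =
          (p.eval t) ^ 2 + (q.eval t) ^ 2 + t * ((r.eval t) ^ 2 + (s.eval t) ^ 2) := by
  constructor
  · intro h
    obtain ⟨A, B, hA, hB, hAB⟩ : IsSumTwoSqDegLE (2 * n) (expand ℝ 2 ξ) :=
      isSumTwoSqDegLE_of_nonneg (by rw [natDegree_expand]; omega)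
        fun x => by rw [expand_eval]; exact h _ (sq_nonneg x)
    refine ⟨contract 2 A, contract 2 B, contract 2 A.divX, contract 2 B.divX,
      natDegree_contract_two_le hA, natDegree_contract_two_le hB,
      natDegree_contract_two_divX_le hA, natDegree_contract_two_divX_le hB, fun t => ?_⟩
    rw [eq_contract_sq_add_X_mul_contract_divX_sq_of_expand_eq hAB]
    simp
  · rintro ⟨p, q, r, s, -, -, -, -, hξ⟩ t ht
    rw [hξ t]
    positivity
end

section
/- Let a < b be real numbers. A polynomial ξ of degree at most 2n+1 is nonnegative on [a, b] if and only if there exist polynomials f, g, each a sum of two squares of polynomials of degree ≤ n, such that ξ(t) = (b - t)·f(t) + (t - a)·g(t) for all t. -/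
/-!
A polynomial that is nonnegative on `[a, b]` factors into pieces of three kinds: linear factors
nonnegative on `[a, b]` (roots outside `(a, b)`), squares `(X - r) ^ 2` (roots inside `(a, b)`,
which are local minima and hence double), and a factor without real roots, which is nonnegative
on all of `ℝ`. Each piece lies in the degree-truncated preordering generated by `b - X` and
`X - a`, and this preordering is closed under multiplication. Absorbing even powers of `b - X`
and `X - a` into the nonnegative coefficient and splitting what is left with
`(b - X) + (X - a) = b - a` puts every element of degree `≤ 2n + 1` in the form
`(b - X) f + (X - a) g` with `f, g ≥ 0` on `ℝ` of degree `≤ 2n + 1`. Finally a polynomial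
nonnegative on `ℝ` is a sum of two squares (pair each complex root with its conjugate and use the
Brahmagupta identity), and there is no cancellation of leading terms in `p ^ 2 + q ^ 2`.
-/

open Polynomial Set
open scoped Pointwise

namespace Polynomial

theorem two_mul_natDegree_le_natDegree_sq_add_sq {R : Type*} [CommRing R] [LinearOrder R]
    [IsStrictOrderedRing R] (p q : R[X]) : 2 * p.natDegree ≤ (p ^ 2 + q ^ 2).natDegree := by
  rcases eq_or_ne p 0 with rfl | hp
  · simp
  have hlc : (p ^ 2).leadingCoeff + (q ^ 2).leadingCoeff ≠ 0 := by
    have := leadingCoeff_ne_zero.2 hp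
    rw [leadingCoeff_pow, leadingCoeff_pow]
    positivity
  rw [← natDegree_pow]
  exact natDegree_le_natDegree
    ((degree_add_eq_of_leadingCoeff_add_ne_zero hlc).symm ▸ le_max_left _ _)

lemma eval_nonneg_of_mul_eval_nonneg {s : Set ℝ} {r : ℝ} {u η : ℝ[X]}
    (hs : s ⊆ closure (s \ {r})) (hu : ∀ t ∈ s, t ≠ r → 0 < u.eval t)
    (h : ∀ t ∈ s, 0 ≤ (u * η).eval t) : ∀ t ∈ s, 0 ≤ η.eval t := by
  have hoff : s \ {r} ⊆ {t | 0 ≤ η.eval t} := fun t ⟨hts, htr⟩ =>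
    (mul_nonneg_iff_of_pos_left (hu t hts htr)).1 (by simpa using h t hts)
  exact fun t ht => closure_minimal hoff (isClosed_le continuous_const η.continuous) (hs ht)

lemma sq_X_sub_C_dvd_of_isLocalMin {p : ℝ[X]} {r : ℝ} (hr : p.IsRoot r)
    (hmin : IsLocalMin (fun x => p.eval x) r) : (X - C r) ^ 2 ∣ p := by
  rcases eq_or_ne p 0 with rfl | hp
  · exact dvd_zero _
  exact (le_rootMultiplicity_iff hp).1 <| (one_lt_rootMultiplicity_iff_isRoot hp).2
    ⟨hr, by simpa [Polynomial.deriv] using hmin.deriv_eq_zero⟩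

lemma sq_add_sq_dvd_of_aeval_eq_zero {f : ℝ[X]} (hf : ∀ x, 0 ≤ f.eval x) {z : ℂ}
    (hz : aeval z f = 0) : (X - C z.re) ^ 2 + C z.im ^ 2 ∣ f := by
  by_cases him : z.im = 0
  · have hr : f.IsRoot z.re := by
      rw [← Complex.re_add_im z, him] at hz
      simpa [← Complex.coe_algebraMap, aeval_algebraMap_apply] using hz
    simpa [him] using sq_X_sub_C_dvd_of_isLocalMin hr
      (.of_forall fun x => by simpa [hr.eq_zero] using hf x)
  · convert f.quadratic_dvd_of_aeval_eq_zero_im_ne_zero hz him using 1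
    rw [Complex.sq_norm, Complex.normSq_apply]
    simp only [map_add, map_mul, map_ofNat]
    ring

theorem exists_eq_sq_add_sq_of_nonneg {f : ℝ[X]} (hf : ∀ x, 0 ≤ f.eval x) :
    ∃ p q : ℝ[X], f = p ^ 2 + q ^ 2 := by
  induction hn : f.natDegree using Nat.strong_induction_on generalizing f with
  | _ n ih =>
  rcases eq_or_ne n 0 with rfl | hn0
  · rw [eq_C_of_natDegree_eq_zero hn] at hf ⊢
    refine ⟨C √(f.coeff 0), 0, ?_⟩
    rw [← C_pow, Real.sq_sqrt (by simpa using hf 0)]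
    ring
  obtain ⟨z, hz⟩ := IsAlgClosed.exists_aeval_eq_zero ℂ f
    (natDegree_pos_iff_degree_pos (p := f) |>.1 (by omega)).ne'
  obtain ⟨g, rfl⟩ := sq_add_sq_dvd_of_aeval_eq_zero hf hz
  have hQ : ((X - C z.re) ^ 2 + C z.im ^ 2).natDegree = 2 := by compute_degree!
  have hg0 : g ≠ 0 := by rintro rfl; simp at hn; omega
  have hQ0 : (X - C z.re) ^ 2 + C z.im ^ 2 ≠ 0 := ne_zero_of_natDegree_gt (n := 0) (by omega)
  have hdeg := natDegree_mul hQ0 hg0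
  have hg : ∀ x, 0 ≤ g.eval x := by
    refine fun x => eval_nonneg_of_mul_eval_nonneg (s := univ) (r := z.re) ?_ ?_
      (fun t _ => hf t) x (mem_univ x)
    · rw [← compl_eq_univ_sdiff, closure_compl_singleton]
    · intro t _ ht
      have := sub_ne_zero.2 ht
      simp only [eval_add, eval_pow, eval_sub, eval_X, eval_C]
      positivity
  obtain ⟨p, q, rfl⟩ := ih g.natDegree (by omega) hg rfl
  exact ⟨(X - C z.re) * p - C z.im * q, (X - C z.re) * q + C z.im * p, by ring⟩


theorem exists_eq_sq_add_sq_natDegree_le_of_nonneg {f : ℝ[X]} {n : ℕ} (hf : ∀ x, 0 ≤ f.eval x)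
    (hdeg : f.natDegree ≤ 2 * n + 1) :
    ∃ p q : ℝ[X], p.natDegree ≤ n ∧ q.natDegree ≤ n ∧ f = p ^ 2 + q ^ 2 := by
  obtain ⟨p, q, rfl⟩ := exists_eq_sq_add_sq_of_nonneg hf
  have hp := two_mul_natDegree_le_natDegree_sq_add_sq p q
  have hq := two_mul_natDegree_le_natDegree_sq_add_sq q p
  rw [add_comm] at hq
  exact ⟨p, q, by omega, by omega, rfl⟩

lemma _root_.Set.Icc_subset_closure_Icc_diff_singleton {a b : ℝ} (hab : a < b) (r : ℝ) :
    Icc a b ⊆ closure (Icc a b \ {r}) := by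
  intro t ht
  rcases ne_or_eq t r with htr | rfl
  · exact subset_closure ⟨ht, htr⟩
  rcases ht.2.lt_or_eq with htb | rfl
  · have hsub : Ioo t b ⊆ Icc a b \ {t} := fun s hs => ⟨⟨ht.1.trans hs.1.le, hs.2.le⟩, hs.1.ne'⟩
    refine closure_mono hsub ?_
    rw [closure_Ioo htb.ne]
    exact left_mem_Icc.2 htb.le
  · have hsub : Ioo a t ⊆ Icc a t \ {t} := fun s hs => ⟨Ioo_subset_Icc_self hs, hs.2.ne⟩
    refine closure_mono hsub ?_
    rw [closure_Ioo hab.ne]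
    exact right_mem_Icc.2 hab.le

lemma eval_nonneg_of_forall_not_isRoot {ξ : ℝ[X]} (hξ : ∀ r, ¬ξ.IsRoot r) {a : ℝ}
    (ha : 0 ≤ ξ.eval a) (t : ℝ) : 0 ≤ ξ.eval t := by
  by_contra! ht
  obtain ⟨r, -, hr⟩ := intermediate_value_uIcc ξ.continuous.continuousOn
    (mem_uIcc.2 (.inl ⟨ht.le, ha⟩) : (0 : ℝ) ∈ uIcc (ξ.eval t) (ξ.eval a))
  exact hξ r hr

/-- The degree-`m` truncation of the preordering of `ℝ[X]` generated by `b - X` and `X - a`. -/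
noncomputable def IccPreordering (a b : ℝ) (m : ℕ) : AddSubmonoid ℝ[X] :=
  AddSubmonoid.closure {p | ∃ (σ : ℝ[X]) (i j : ℕ), (∀ x, 0 ≤ σ.eval x) ∧
    σ.natDegree + i + j ≤ m ∧ σ * (C b - X) ^ i * (X - C a) ^ j = p}

namespace IccPreordering

variable {a b : ℝ} {m m' : ℕ}

lemma mono (h : m ≤ m') : IccPreordering a b m ≤ IccPreordering a b m' :=
  AddSubmonoid.closure_mono fun _ ⟨σ, i, j, hσ, hd, hp⟩ => ⟨σ, i, j, hσ, hd.trans h, hp⟩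

lemma mul_mem {p q : ℝ[X]} (hp : p ∈ IccPreordering a b m) (hq : q ∈ IccPreordering a b m') :
    p * q ∈ IccPreordering a b (m + m') := by
  have hpq := AddSubmonoid.mul_mem_mul hp hq
  rw [IccPreordering, IccPreordering, AddSubmonoid.closure_mul_closure] at hpq
  refine AddSubmonoid.closure_mono ?_ hpq
  rintro _ ⟨_, ⟨σ, i, j, hσ, hd, rfl⟩, _, ⟨σ', i', j', hσ', hd', rfl⟩, rfl⟩
  refine ⟨σ * σ', i + i', j + j', fun x => ?_, ?_, by ring⟩
  · simpa using mul_nonneg (hσ x) (hσ' x)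
  · linarith [natDegree_mul_le (p := σ) (q := σ')]

lemma mem_of_nonneg {σ : ℝ[X]} (hσ : ∀ x, 0 ≤ σ.eval x) (hd : σ.natDegree ≤ m) :
    σ ∈ IccPreordering a b m :=
  AddSubmonoid.subset_closure ⟨σ, 0, 0, hσ, hd, by ring⟩

lemma mem_one_of_natDegree_le_one (hab : a < b) {ℓ : ℝ[X]} (hℓ : ℓ.natDegree ≤ 1)
    (ha : 0 ≤ ℓ.eval a) (hb : 0 ≤ ℓ.eval b) : ℓ ∈ IccPreordering a b 1 := by
  have hba : 0 < b - a := sub_pos.2 hab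
  have hℓt : ∀ t, ℓ.eval t = ℓ.coeff 1 * t + ℓ.coeff 0 := fun t => by
    conv_lhs => rw [eq_X_add_C_of_natDegree_le_one hℓ]
    simp
  -- Lagrange interpolation of `ℓ` at the nodes `a` and `b`.
  have key : ℓ = C (ℓ.eval a / (b - a)) * (C b - X) ^ 1 * (X - C a) ^ 0 +
      C (ℓ.eval b / (b - a)) * (C b - X) ^ 0 * (X - C a) ^ 1 := by
    refine Polynomial.funext fun t => ?_
    simp only [eval_add, eval_mul, eval_sub, eval_C, eval_X, pow_one, pow_zero, mul_one]
    rw [hℓt, hℓt, hℓt]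
    field_simp
    ring
  rw [key]
  refine add_mem (AddSubmonoid.subset_closure ⟨_, 1, 0, fun _ => ?_, by simp, rfl⟩)
    (AddSubmonoid.subset_closure ⟨_, 0, 1, fun _ => ?_, by simp, rfl⟩) <;>
  · rw [eval_C]; positivity

lemma exists_mul_eq_of_isRoot (hab : a < b) {ξ : ℝ[X]} (hξ : ∀ t ∈ Icc a b, 0 ≤ ξ.eval t)
    {r : ℝ} (hr : ξ.IsRoot r) :
    ∃ u η : ℝ[X], 0 < u.natDegree ∧ u ∈ IccPreordering a b u.natDegree ∧
      (∀ t ∈ Icc a b, t ≠ r → 0 < u.eval t) ∧ ξ = u * η := by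
  obtain ⟨η, hη⟩ := dvd_iff_isRoot.2 hr
  rcases le_or_gt r a with hra | hra
  · refine ⟨X - C r, η, by simp, ?_, fun t ht htr => ?_, hη⟩
    · rw [natDegree_X_sub_C]
      exact mem_one_of_natDegree_le_one hab (by simp) (by simpa using hra) (by simp; linarith)
    · simpa using lt_of_le_of_ne (hra.trans ht.1) htr.symm
  rcases le_or_gt b r with hrb | hrb
  · have hdeg : (C r - X).natDegree = 1 := by compute_degree!
    refine ⟨C r - X, -η, by omega, ?_, fun t ht htr => ?_, by rw [hη]; ring⟩
    · rw [hdeg]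
      exact mem_one_of_natDegree_le_one hab hdeg.le (by simp; linarith) (by simpa using hrb)
    · simpa using lt_of_le_of_ne (ht.2.trans hrb) htr
  · obtain ⟨η, rfl⟩ := sq_X_sub_C_dvd_of_isLocalMin hr <|
      Filter.eventually_of_mem (Icc_mem_nhds hra hrb) fun t ht => by
        simpa [hr.eq_zero] using hξ t ht
    have hdeg : ((X - C r) ^ 2).natDegree = 2 := by simp
    refine ⟨(X - C r) ^ 2, η, by omega, ?_, fun t _ htr => ?_, rfl⟩
    · exact mem_of_nonneg (fun t => by simpa using sq_nonneg (t - r)) le_rfl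
    · have := sub_ne_zero.2 htr
      simp only [eval_pow, eval_sub, eval_X, eval_C]
      positivity

theorem mem_of_nonneg_on_Icc (hab : a < b) {ξ : ℝ[X]} (hξ : ∀ t ∈ Icc a b, 0 ≤ ξ.eval t) :
    ξ ∈ IccPreordering a b ξ.natDegree := by
  induction hn : ξ.natDegree using Nat.strong_induction_on generalizing ξ with
  | _ n ih =>
  subst hn
  obtain ⟨r, hr⟩ | hroot := em (∃ r, ξ.IsRoot r)
  · obtain ⟨u, η, hu0, hu, hupos, rfl⟩ := exists_mul_eq_of_isRoot hab hξ hr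
    rcases eq_or_ne η 0 with rfl | hη
    · simp [zero_mem]
    have hdeg := natDegree_mul (ne_zero_of_natDegree_gt hu0) hη
    rw [hdeg]
    refine mul_mem hu (ih _ (by omega) ?_ rfl)
    exact eval_nonneg_of_mul_eval_nonneg (Icc_subset_closure_Icc_diff_singleton hab r) hupos hξ
  · have hξa := hξ a (left_mem_Icc.2 hab.le)
    exact mem_of_nonneg (eval_nonneg_of_forall_not_isRoot (not_exists.1 hroot) hξa) le_rfl

lemma natDegree_mul_pow_le {σ : ℝ[X]} {d : ℕ} (hσ : σ.natDegree ≤ d) (i j : ℕ) :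
    (σ * (C b - X) ^ i * (X - C a) ^ j).natDegree ≤ d + i + j := by
  refine natDegree_mul_le.trans (add_le_add (natDegree_mul_le.trans (add_le_add hσ ?_)) ?_) <;>
  · exact (natDegree_pow_le_of_le _ (by compute_degree!)).trans (mul_one _).le

lemma eval_mul_pow_nonneg {σ : ℝ[X]} (hσ : ∀ x, 0 ≤ σ.eval x) {i j : ℕ} (hi : Even i)
    (hj : Even j) (x : ℝ) : 0 ≤ (σ * (C b - X) ^ i * (X - C a) ^ j).eval x := by
  simp only [eval_mul, eval_pow, eval_sub, eval_C, eval_X]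
  exact mul_nonneg (mul_nonneg (hσ x) (hi.pow_nonneg _)) (hj.pow_nonneg _)

lemma exists_lukacs_repr_of_mul_pow (hab : a < b) {σ : ℝ[X]} (hσ : ∀ x, 0 ≤ σ.eval x)
    {i j : ℕ} (hd : σ.natDegree + i + j ≤ m) :
    ∃ f g : ℝ[X], (∀ x, 0 ≤ f.eval x) ∧ (∀ x, 0 ≤ g.eval x) ∧ f.natDegree ≤ m ∧
      g.natDegree ≤ m ∧ σ * (C b - X) ^ i * (X - C a) ^ j = (C b - X) * f + (X - C a) * g := by
  have hc : (C b - X) * C (b - a)⁻¹ + (X - C a) * C (b - a)⁻¹ = 1 := by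
    rw [← add_mul, sub_add_sub_cancel, ← C_sub, ← C_mul, mul_inv_cancel₀ (sub_pos.2 hab).ne', C_1]
  have hcσ : ∀ x, 0 ≤ (C (b - a)⁻¹ * σ).eval x := fun x => by
    simpa using mul_nonneg (inv_nonneg.2 (sub_pos.2 hab).le) (hσ x)
  have hcd := natDegree_C_mul_le (b - a)⁻¹ σ
  -- Even powers go into the coefficient; of the remaining factors `1`, `b - X`, `X - a`,
  -- `(b - X) * (X - a)`, the first and last are split by `hc`.
  obtain ⟨k, rfl | rfl⟩ := Nat.even_or_odd' i <;> obtain ⟨l, rfl | rfl⟩ := Nat.even_or_odd' j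
  · set c := C (b - a)⁻¹ * σ * (C b - X) ^ (2 * k) * (X - C a) ^ (2 * l)
    have hc0 : ∀ x, 0 ≤ c.eval x := eval_mul_pow_nonneg hcσ (even_two_mul k) (even_two_mul l)
    have hcm : c.natDegree ≤ m := (natDegree_mul_pow_le hcd _ _).trans hd
    exact ⟨c, c, hc0, hc0, hcm, hcm,
      by linear_combination (-σ * (C b - X) ^ (2 * k) * (X - C a) ^ (2 * l)) * hc⟩
  · exact ⟨0, σ * (C b - X) ^ (2 * k) * (X - C a) ^ (2 * l), by simp,
      eval_mul_pow_nonneg hσ (even_two_mul k) (even_two_mul l), by simp,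
      (natDegree_mul_pow_le le_rfl _ _).trans (by omega), by ring⟩
  · exact ⟨σ * (C b - X) ^ (2 * k) * (X - C a) ^ (2 * l), 0,
      eval_mul_pow_nonneg hσ (even_two_mul k) (even_two_mul l), by simp,
      (natDegree_mul_pow_le le_rfl _ _).trans (by omega), by simp, by ring⟩
  · exact ⟨C (b - a)⁻¹ * σ * (C b - X) ^ (2 * k) * (X - C a) ^ (2 * (l + 1)),
      C (b - a)⁻¹ * σ * (C b - X) ^ (2 * (k + 1)) * (X - C a) ^ (2 * l),
      eval_mul_pow_nonneg hcσ (even_two_mul k) (even_two_mul (l + 1)),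
      eval_mul_pow_nonneg hcσ (even_two_mul (k + 1)) (even_two_mul l),
      (natDegree_mul_pow_le hcd _ _).trans (by omega),
      (natDegree_mul_pow_le hcd _ _).trans (by omega),
      by linear_combination (-σ * (C b - X) ^ (2 * k + 1) * (X - C a) ^ (2 * l + 1)) * hc⟩

lemma exists_lukacs_repr_of_mem (hab : a < b) {ξ : ℝ[X]} (hξ : ξ ∈ IccPreordering a b m) :
    ∃ f g : ℝ[X], (∀ x, 0 ≤ f.eval x) ∧ (∀ x, 0 ≤ g.eval x) ∧ f.natDegree ≤ m ∧
      g.natDegree ≤ m ∧ ξ = (C b - X) * f + (X - C a) * g := by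
  induction hξ using AddSubmonoid.closure_induction with
  | mem _ h =>
    obtain ⟨σ, i, j, hσ, hd, rfl⟩ := h
    exact exists_lukacs_repr_of_mul_pow hab hσ hd
  | zero => exact ⟨0, 0, by simp, by simp, by simp, by simp, by ring⟩
  | add _ _ _ _ h₁ h₂ =>
    obtain ⟨f₁, g₁, hf₁, hg₁, hdf₁, hdg₁, rfl⟩ := h₁
    obtain ⟨f₂, g₂, hf₂, hg₂, hdf₂, hdg₂, rfl⟩ := h₂
    refine ⟨f₁ + f₂, g₁ + g₂, fun x => ?_, fun x => ?_, natDegree_add_le_of_degree_le hdf₁ hdf₂,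
      natDegree_add_le_of_degree_le hdg₁ hdg₂, by ring⟩
    · simpa using add_nonneg (hf₁ x) (hf₂ x)
    · simpa using add_nonneg (hg₁ x) (hg₂ x)

end IccPreordering

end Polynomial

/-- (Lukács/Markov, odd degree) A real polynomial of degree
≤ 2n+1 is nonnegative on [a,b] iff ξ(t) = (b-t)·f(t) + (t-a)·g(t) with f, g
sums of two squares of degree-≤n polynomials. -/
theorem nonneg_interval_odd (n : ℕ) (a b : ℝ) (hab : a < b) (ξ : Polynomial ℝ)
    (hdeg : ξ.natDegree ≤ 2 * n + 1) :
    (∀ t ∈ Set.Icc a b, 0 ≤ ξ.eval t) ↔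
      ∃ p q r s : Polynomial ℝ,
        p.natDegree ≤ n ∧ q.natDegree ≤ n ∧ r.natDegree ≤ n ∧ s.natDegree ≤ n ∧
        ∀ t : ℝ, ξ.eval t =
          (b - t) * ((p.eval t) ^ 2 + (q.eval t) ^ 2) +
            (t - a) * ((r.eval t) ^ 2 + (s.eval t) ^ 2) := by
  constructor
  · intro hξ
    obtain ⟨f, g, hf, hg, hdf, hdg, rfl⟩ := IccPreordering.exists_lukacs_repr_of_mem hab
      (IccPreordering.mono hdeg (IccPreordering.mem_of_nonneg_on_Icc hab hξ))
    obtain ⟨p, q, hp, hq, rfl⟩ := exists_eq_sq_add_sq_natDegree_le_of_nonneg hf hdf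
    obtain ⟨r, s, hr, hs, rfl⟩ := exists_eq_sq_add_sq_natDegree_le_of_nonneg hg hdg
    exact ⟨p, q, r, s, hp, hq, hr, hs, fun t => by simp⟩
  · rintro ⟨p, q, r, s, -, -, -, -, hξ⟩ t ⟨hat, htb⟩
    have hbt : 0 ≤ b - t := sub_nonneg.2 htb
    have hta : 0 ≤ t - a := sub_nonneg.2 hat
    rw [hξ t]
    positivity
end

section
/- Let a < b. A polynomial ξ of degree at most 2n is nonnegative on [a, b] if and only if there exist a polynomial f that is a sum of two squares of polynomials of degree ≤ n and a polynomial g that is a sum of two squares of polynomials of degree ≤ n-1 such that ξ(t) = f(t) + (b - t)(t - a)·g(t) for all t. -/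
/-!
Induction on the degree, peeling off one factor at a time. A nonconstant polynomial that is
nonnegative on `[a, b]` is divisible either by some `(X - r)² + c²` (coming from a non-real root,
or from a root in `(a, b)`, which is a local minimum and hence a double root), or by a linear `ℓ`
that is nonnegative on `[a, b]` (coming from a root outside `(a, b)`); by continuity the cofactor is
again nonnegative on `[a, b]`. Writing `ℓ = u (X - a) + v (b - X)` with `u, v ≥ 0`, multiplication
by `ℓ` turns a representation `σ + (b - X)(X - a) τ` into one of the form `(X - a) σ' + (b - X) τ'`
and back, where `σ, τ, σ', τ'` are nonnegative on all of `ℝ`. A polynomial nonnegative on `ℝ` is a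
sum of two squares, by the same peeling and `(x² + y²)(p² + q²) = (xp - yq)² + (xq + yp)²`.
-/

open Polynomial Set

theorem Set.Icc_subset_closure_diff_singleton {a b : ℝ} (hab : a < b) (t₀ : ℝ) :
    Icc a b ⊆ closure (Icc a b \ {t₀}) :=
  calc Icc a b = closure (Ioo a b) := (closure_Ioo hab.ne).symm
    _ ⊆ closure (Ioo a b ∩ {t₀}ᶜ) := closure_minimal
        ((dense_compl_singleton t₀).open_subset_closure_inter isOpen_Ioo) isClosed_closure
    _ ⊆ closure (Icc a b \ {t₀}) := closure_mono fun _ ht => ⟨Ioo_subset_Icc_self ht.1, ht.2⟩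

namespace Polynomial

lemma natDegree_C_mul_add_C_mul_le {R : Type*} [Semiring R] {p q : R[X]} {k : ℕ} (u v : R)
    (hp : p.natDegree ≤ k) (hq : q.natDegree ≤ k) : (C u * p + C v * q).natDegree ≤ k :=
  natDegree_add_le_of_degree_le ((natDegree_C_mul_le u p).trans hp)
    ((natDegree_C_mul_le v q).trans hq)

lemma natDegree_sq_mul_le {R : Type*} [Semiring R] {ℓ τ : R[X]} {k : ℕ} (hℓ : ℓ.natDegree ≤ 1)
    (hτ : τ = 0 ∨ τ.natDegree + 2 ≤ k) : (ℓ ^ 2 * τ).natDegree ≤ k := by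
  rcases hτ with rfl | hτ
  · simp
  · exact (natDegree_mul_le_of_le (natDegree_pow_le_of_le 2 hℓ) le_rfl).trans (by omega)

lemma eq_C_mul_X_sub_C_add_C_mul_C_sub_X {K : Type*} [Field K] {a b : K} (hab : a ≠ b)
    {ℓ : K[X]} (hℓ : ℓ.natDegree ≤ 1) :
    ℓ = C (ℓ.eval b / (b - a)) * (X - C a) + C (ℓ.eval a / (b - a)) * (C b - X) := by
  have hba : b - a ≠ 0 := sub_ne_zero.2 hab.symm
  have hcombine (u v : K) :
      C u * (X - C a) + C v * (C b - X) = C (u - v) * X + C (v * b - u * a) := by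
    simp only [map_sub, map_mul]
    ring
  rw [hcombine, eq_X_add_C_of_natDegree_le_one hℓ]
  simp only [eval_add, eval_mul, eval_C, eval_X]
  congr 3 <;> field_simp <;> ring

lemma natDegree_X_sub_C_sq_add_C_sq_mul {R : Type*} [CommRing R] [IsDomain R] (r c : R)
    {η : R[X]} (hη : η ≠ 0) : (((X - C r) ^ 2 + C c ^ 2) * η).natDegree = η.natDegree + 2 := by
  have hmonic : ((X - C r) ^ 2 + C c ^ 2).Monic := by monicity!
  have hdeg : ((X - C r) ^ 2 + C c ^ 2).natDegree = 2 := by compute_degree!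
  rw [natDegree_mul hmonic.ne_zero hη, hdeg, add_comm]

lemma X_sub_C_sq_dvd_of_isLocalMin {ξ : ℝ[X]} {t₀ : ℝ} (hmin : IsLocalMin (ξ.eval ·) t₀)
    (hroot : ξ.IsRoot t₀) : (X - C t₀) ^ 2 ∣ ξ := by
  rcases eq_or_ne ξ 0 with rfl | hξ
  · exact dvd_zero _
  rw [← le_rootMultiplicity_iff hξ, Nat.succ_le_iff, one_lt_rootMultiplicity_iff_isRoot hξ]
  exact ⟨hroot, by rw [IsRoot.def, ← Polynomial.deriv]; exact hmin.deriv_eq_zero⟩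

lemma exists_isRoot_or_sq_add_sq_dvd {ξ : ℝ[X]} (hξ : 0 < ξ.degree) :
    (∃ t, ξ.IsRoot t) ∨ ∃ r c : ℝ, (X - C r) ^ 2 + C c ^ 2 ∣ ξ := by
  obtain ⟨z, hz⟩ := IsAlgClosed.exists_aeval_eq_zero ℂ ξ hξ.ne'
  rcases eq_or_ne z.im 0 with him | him
  · refine .inl ⟨z.re, ?_⟩
    have hz' : z = (z.re : ℂ) := Complex.ext rfl (by simp [him])
    rw [hz', ← Complex.coe_algebraMap, aeval_algebraMap_apply_eq_algebraMap_eval] at hz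
    simpa using hz
  · refine .inr ⟨z.re, z.im, ?_⟩
    convert ξ.quadratic_dvd_of_aeval_eq_zero_im_ne_zero hz him using 1
    rw [Complex.sq_norm, Complex.normSq_apply]
    simp only [map_add, map_mul, map_ofNat]
    ring

lemma eval_nonneg_of_mul {s : Set ℝ} {t₀ : ℝ} (hs : s ⊆ closure (s \ {t₀})) {f η : ℝ[X]}
    (hf : ∀ t ∈ s, t ≠ t₀ → 0 < f.eval t) (h : ∀ t ∈ s, 0 ≤ (f * η).eval t) :
    ∀ t ∈ s, 0 ≤ η.eval t := by
  have hclosed : IsClosed {t | 0 ≤ η.eval t} := isClosed_le continuous_const η.continuous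
  refine fun t ht => hclosed.closure_subset_iff.2 (fun t ht => ?_) (hs ht)
  exact nonneg_of_mul_nonneg_right (by simpa using h t ht.1) (hf t ht.1 ht.2)

lemma eval_nonneg_of_X_sub_C_sq_add_C_sq_mul {s : Set ℝ} {r c : ℝ} (hs : s ⊆ closure (s \ {r}))
    {η : ℝ[X]} (h : ∀ t ∈ s, 0 ≤ (((X - C r) ^ 2 + C c ^ 2) * η).eval t) :
    ∀ t ∈ s, 0 ≤ η.eval t := by
  refine eval_nonneg_of_mul hs (fun t _ ht => ?_) h
  have : t - r ≠ 0 := sub_ne_zero.2 ht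
  simp only [eval_add, eval_pow, eval_sub, eval_X, eval_C]
  positivity

lemma exists_sq_add_sq_dvd_of_nonneg {ξ : ℝ[X]} (hξ : 0 < ξ.degree) (hnn : ∀ t, 0 ≤ ξ.eval t) :
    ∃ r c : ℝ, (X - C r) ^ 2 + C c ^ 2 ∣ ξ := by
  refine (exists_isRoot_or_sq_add_sq_dvd hξ).elim (fun ⟨t₀, ht₀⟩ => ⟨t₀, 0, ?_⟩) id
  have hmin : IsLocalMin (ξ.eval ·) t₀ :=
    .of_forall fun t => by simpa [ht₀.eq_zero] using hnn t
  simpa using X_sub_C_sq_dvd_of_isLocalMin hmin ht₀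

lemma exists_sq_add_sq_dvd_or_eq_mul_of_nonneg_on_Icc {a b : ℝ} (hab : a < b) {ξ : ℝ[X]}
    (hξ : 0 < ξ.degree) (hnn : ∀ t ∈ Icc a b, 0 ≤ ξ.eval t) :
    (∃ r c : ℝ, (X - C r) ^ 2 + C c ^ 2 ∣ ξ) ∨
      ∃ ℓ η : ℝ[X], ℓ.natDegree = 1 ∧ 0 ≤ ℓ.eval a ∧ 0 ≤ ℓ.eval b ∧ ξ = ℓ * η ∧
        ∀ t ∈ Icc a b, 0 ≤ η.eval t := by
  refine (exists_isRoot_or_sq_add_sq_dvd hξ).elim (fun ⟨t₀, ht₀⟩ => ?_) .inl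
  by_cases hin : t₀ ∈ Ioo a b
  · have hmin : IsLocalMin (ξ.eval ·) t₀ := Filter.mem_of_superset (Ioo_mem_nhds hin.1 hin.2)
      fun t ht => by simpa [ht₀.eq_zero] using hnn t (Ioo_subset_Icc_self ht)
    exact .inl ⟨t₀, 0, by simpa using X_sub_C_sq_dvd_of_isLocalMin hmin ht₀⟩
  obtain ⟨η, rfl⟩ := dvd_iff_isRoot.2 ht₀
  have hs := Icc_subset_closure_diff_singleton hab t₀
  rw [mem_Ioo, not_and_or, not_lt, not_lt] at hin
  right
  rcases hin with ha | hb
  · refine ⟨X - C t₀, η, natDegree_X_sub_C t₀, by simpa using ha, by simpa using ha.trans hab.le,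
      rfl, eval_nonneg_of_mul hs (fun t ht hne => ?_) hnn⟩
    simpa using lt_of_le_of_ne (ha.trans ht.1) (Ne.symm hne)
  · have hflip : (C t₀ - X) * -η = (X - C t₀) * η := by ring
    refine ⟨C t₀ - X, -η, by compute_degree!, by simpa using hab.le.trans hb, by simpa using hb,
      by rw [hflip], eval_nonneg_of_mul hs (fun t ht hne => ?_) (by rwa [hflip])⟩
    simpa using lt_of_le_of_ne (ht.2.trans hb) hne

theorem exists_eq_sq_add_sq_of_nonneg_s10 {ξ : ℝ[X]} (hnn : ∀ t, 0 ≤ ξ.eval t) :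
    ∃ p q : ℝ[X], 2 * p.natDegree ≤ ξ.natDegree ∧ 2 * q.natDegree ≤ ξ.natDegree ∧
      ξ = p ^ 2 + q ^ 2 := by
  induction hd : ξ.natDegree using Nat.strong_induction_on generalizing ξ with
  | _ d IH =>
  rcases Nat.eq_zero_or_pos d with rfl | hd0
  · rw [eq_C_of_natDegree_eq_zero hd] at hnn ⊢
    refine ⟨C √(ξ.coeff 0), 0, by simp, by simp, ?_⟩
    rw [← C_pow, Real.sq_sqrt (by simpa using hnn 0)]
    ring
  obtain ⟨r, c, η, rfl⟩ :=
    exists_sq_add_sq_dvd_of_nonneg (natDegree_pos_iff_degree_pos.1 (hd ▸ hd0)) hnn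
  have hη0 : η ≠ 0 := by rintro rfl; simp only [mul_zero, natDegree_zero] at hd; omega
  rw [natDegree_X_sub_C_sq_add_C_sq_mul r c hη0] at hd
  have hη : ∀ t, 0 ≤ η.eval t := fun t =>
    eval_nonneg_of_X_sub_C_sq_add_C_sq_mul (s := univ) (by simp [← compl_eq_univ_sdiff])
      (fun t _ => hnn t) t (mem_univ t)
  obtain ⟨p, q, hp, hq, rfl⟩ := IH _ (by omega) hη rfl
  refine ⟨(X - C r) * p - C c * q, (X - C r) * q + C c * p, ?_, ?_, by ring⟩
  · have hsub := natDegree_sub_le ((X - C r) * p) (C c * q)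
    have hmul := natDegree_mul_le (p := X - C r) (q := p)
    have hC := natDegree_C_mul_le c q
    rw [natDegree_X_sub_C] at hmul
    omega
  · have hadd := natDegree_add_le ((X - C r) * q) (C c * p)
    have hmul := natDegree_mul_le (p := X - C r) (q := q)
    have hC := natDegree_C_mul_le c p
    rw [natDegree_X_sub_C] at hmul
    omega

end Polynomial

section Lukacs

variable (a b : ℝ)

-- `τ = 0` is allowed separately because `natDegree 0 = 0` would exclude it when `m = 0`.
def HasEvenLukacsRepr (m : ℕ) (ξ : ℝ[X]) : Prop :=
  ∃ σ τ : ℝ[X], (∀ t, 0 ≤ σ.eval t) ∧ (∀ t, 0 ≤ τ.eval t) ∧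
    σ.natDegree ≤ 2 * m ∧ (τ = 0 ∨ τ.natDegree + 2 ≤ 2 * m) ∧
    ξ = σ + (C b - X) * (X - C a) * τ

def HasOddLukacsRepr (m : ℕ) (ξ : ℝ[X]) : Prop :=
  ∃ σ τ : ℝ[X], (∀ t, 0 ≤ σ.eval t) ∧ (∀ t, 0 ≤ τ.eval t) ∧
    σ.natDegree ≤ 2 * m ∧ τ.natDegree ≤ 2 * m ∧
    ξ = (X - C a) * σ + (C b - X) * τ

variable {a b}

lemma hasEvenLukacsRepr_C {c : ℝ} (hc : 0 ≤ c) (m : ℕ) : HasEvenLukacsRepr a b m (C c) :=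
  ⟨C c, 0, fun _ => by simpa using hc, fun _ => by simp, by simp, .inl rfl, by simp⟩

lemma hasOddLukacsRepr_C (hab : a < b) {c : ℝ} (hc : 0 ≤ c) (m : ℕ) :
    HasOddLukacsRepr a b m (C c) := by
  have hc' : 0 ≤ c / (b - a) := div_nonneg hc (sub_nonneg.2 hab.le)
  have hsplit := eq_C_mul_X_sub_C_add_C_mul_C_sub_X hab.ne ((natDegree_C c).trans_le zero_le_one)
  simp only [eval_C] at hsplit
  exact ⟨C (c / (b - a)), C (c / (b - a)), fun _ => by simpa using hc',
    fun _ => by simpa using hc', by simp, by simp, hsplit.trans (by ring)⟩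

lemma HasEvenLukacsRepr.mul {m : ℕ} {ξ q : ℝ[X]} (h : HasEvenLukacsRepr a b m ξ)
    (hq : ∀ t, 0 ≤ q.eval t) (hq2 : q.natDegree ≤ 2) : HasEvenLukacsRepr a b (m + 1) (q * ξ) := by
  obtain ⟨σ, τ, hσ, hτ, hσd, hτd, rfl⟩ := h
  refine ⟨q * σ, q * τ, fun t => ?_, fun t => ?_, ?_, ?_, by ring⟩
  · simpa only [eval_mul] using mul_nonneg (hq t) (hσ t)
  · simpa only [eval_mul] using mul_nonneg (hq t) (hτ t)
  · exact (natDegree_mul_le_of_le hq2 hσd).trans (by omega)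
  · rcases hτd with rfl | hτd
    · simp
    · have := natDegree_mul_le_of_le hq2 (le_refl τ.natDegree)
      exact .inr (by omega)

lemma HasOddLukacsRepr.mul {m : ℕ} {ξ q : ℝ[X]} (h : HasOddLukacsRepr a b m ξ)
    (hq : ∀ t, 0 ≤ q.eval t) (hq2 : q.natDegree ≤ 2) : HasOddLukacsRepr a b (m + 1) (q * ξ) := by
  obtain ⟨σ, τ, hσ, hτ, hσd, hτd, rfl⟩ := h
  refine ⟨q * σ, q * τ, fun t => ?_, fun t => ?_, ?_, ?_, by ring⟩
  · simpa only [eval_mul] using mul_nonneg (hq t) (hσ t)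
  · simpa only [eval_mul] using mul_nonneg (hq t) (hτ t)
  · exact (natDegree_mul_le_of_le hq2 hσd).trans (by omega)
  · exact (natDegree_mul_le_of_le hq2 hτd).trans (by omega)

lemma HasEvenLukacsRepr.affine_mul (hab : a < b) {m : ℕ} {ξ ℓ : ℝ[X]}
    (h : HasEvenLukacsRepr a b m ξ) (hℓ : ℓ.natDegree ≤ 1) (ha : 0 ≤ ℓ.eval a)
    (hb : 0 ≤ ℓ.eval b) : HasOddLukacsRepr a b m (ℓ * ξ) := by
  obtain ⟨σ, τ, hσ, hτ, hσd, hτd, rfl⟩ := h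
  set u := ℓ.eval b / (b - a)
  set v := ℓ.eval a / (b - a)
  have hu : 0 ≤ u := div_nonneg hb (sub_nonneg.2 hab.le)
  have hv : 0 ≤ v := div_nonneg ha (sub_nonneg.2 hab.le)
  rw [eq_C_mul_X_sub_C_add_C_mul_C_sub_X hab.ne hℓ]
  refine ⟨C u * σ + C v * ((C b - X) ^ 2 * τ), C v * σ + C u * ((X - C a) ^ 2 * τ),
    fun t => ?_, fun t => ?_, natDegree_C_mul_add_C_mul_le u v hσd ?_,
    natDegree_C_mul_add_C_mul_le v u hσd ?_, by ring⟩
  · have hσt := hσ t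
    have hτt := hτ t
    simp only [eval_add, eval_mul, eval_pow, eval_sub, eval_C, eval_X]
    positivity
  · have hσt := hσ t
    have hτt := hτ t
    simp only [eval_add, eval_mul, eval_pow, eval_sub, eval_C, eval_X]
    positivity
  · exact natDegree_sq_mul_le (by compute_degree) hτd
  · exact natDegree_sq_mul_le (natDegree_X_sub_C_le a) hτd

lemma HasOddLukacsRepr.affine_mul (hab : a < b) {m : ℕ} {ξ ℓ : ℝ[X]}
    (h : HasOddLukacsRepr a b m ξ) (hℓ : ℓ.natDegree ≤ 1) (ha : 0 ≤ ℓ.eval a)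
    (hb : 0 ≤ ℓ.eval b) : HasEvenLukacsRepr a b (m + 1) (ℓ * ξ) := by
  obtain ⟨σ, τ, hσ, hτ, hσd, hτd, rfl⟩ := h
  set u := ℓ.eval b / (b - a)
  set v := ℓ.eval a / (b - a)
  have hu : 0 ≤ u := div_nonneg hb (sub_nonneg.2 hab.le)
  have hv : 0 ≤ v := div_nonneg ha (sub_nonneg.2 hab.le)
  rw [eq_C_mul_X_sub_C_add_C_mul_C_sub_X hab.ne hℓ]
  refine ⟨C u * ((X - C a) ^ 2 * σ) + C v * ((C b - X) ^ 2 * τ), C u * τ + C v * σ,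
    fun t => ?_, fun t => ?_, natDegree_C_mul_add_C_mul_le u v ?_ ?_,
    .inr ?_, by ring⟩
  · have hσt := hσ t
    have hτt := hτ t
    simp only [eval_add, eval_mul, eval_pow, eval_sub, eval_C, eval_X]
    positivity
  · have hσt := hσ t
    have hτt := hτ t
    simp only [eval_add, eval_mul, eval_C]
    positivity
  · exact natDegree_sq_mul_le (natDegree_X_sub_C_le a) (.inr (by omega))
  · exact natDegree_sq_mul_le (by compute_degree) (.inr (by omega))
  · have := natDegree_C_mul_add_C_mul_le u v hτd hσd
    omega

theorem hasLukacsRepr_of_nonneg_on_Icc (hab : a < b) {ξ : ℝ[X]}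
    (hnn : ∀ t ∈ Icc a b, 0 ≤ ξ.eval t) (m : ℕ) :
    (ξ.natDegree ≤ 2 * m → HasEvenLukacsRepr a b m ξ) ∧
      (ξ.natDegree ≤ 2 * m + 1 → HasOddLukacsRepr a b m ξ) := by
  induction hd : ξ.natDegree using Nat.strong_induction_on generalizing ξ m with
  | _ d IH =>
  rcases Nat.eq_zero_or_pos d with rfl | hd0
  · rw [eq_C_of_natDegree_eq_zero hd] at hnn ⊢
    have hc : 0 ≤ ξ.coeff 0 := by simpa using hnn a ⟨le_rfl, hab.le⟩
    exact ⟨fun _ => hasEvenLukacsRepr_C hc m, fun _ => hasOddLukacsRepr_C hab hc m⟩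
  have hξ : 0 < ξ.degree := natDegree_pos_iff_degree_pos.1 (hd ▸ hd0)
  rcases exists_sq_add_sq_dvd_or_eq_mul_of_nonneg_on_Icc hab hξ hnn with
    ⟨r, c, η, rfl⟩ | ⟨ℓ, η, hℓ, ha, hb, rfl, hη⟩
  · have hη0 : η ≠ 0 := by rintro rfl; simp only [mul_zero, natDegree_zero] at hd; omega
    rw [natDegree_X_sub_C_sq_add_C_sq_mul r c hη0] at hd
    have hη := eval_nonneg_of_X_sub_C_sq_add_C_sq_mul (Icc_subset_closure_diff_singleton hab r) hnn
    have hq : ∀ t, 0 ≤ ((X - C r) ^ 2 + C c ^ 2).eval t := fun t => by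
      simp only [eval_add, eval_pow, eval_sub, eval_X, eval_C]
      positivity
    have hq2 : ((X - C r) ^ 2 + C c ^ 2).natDegree ≤ 2 := by compute_degree
    refine ⟨fun hdm => ?_, fun hdm => ?_⟩ <;> obtain ⟨k, rfl⟩ : ∃ k, m = k + 1 := ⟨m - 1, by omega⟩
    · exact ((IH _ (by omega) hη k rfl).1 (by omega)).mul hq hq2
    · exact ((IH _ (by omega) hη k rfl).2 (by omega)).mul hq hq2
  · have hη0 : η ≠ 0 := by rintro rfl; simp only [mul_zero, natDegree_zero] at hd; omega
    rw [natDegree_mul (by rintro rfl; simp at hℓ) hη0, hℓ] at hd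
    refine ⟨fun hdm => ?_,
      fun hdm => ((IH _ (by omega) hη m rfl).1 (by omega)).affine_mul hab hℓ.le ha hb⟩
    obtain ⟨k, rfl⟩ : ∃ k, m = k + 1 := ⟨m - 1, by omega⟩
    exact ((IH _ (by omega) hη k rfl).2 (by omega)).affine_mul hab hℓ.le ha hb

end Lukacs

/-- (Lukács/Markov, even degree) A real polynomial of degree
≤ 2n is nonnegative on [a,b] iff ξ(t) = f(t) + (b-t)(t-a)·g(t) with f a sum of
two squares of degree-≤n polynomials and g a sum of two squares of
degree-≤(n-1) polynomials. -/
theorem nonneg_interval_even (n : ℕ) (a b : ℝ) (hab : a < b) (ξ : Polynomial ℝ)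
    (hdeg : ξ.natDegree ≤ 2 * n) :
    (∀ t ∈ Set.Icc a b, 0 ≤ ξ.eval t) ↔
      ∃ p q r s : Polynomial ℝ,
        p.natDegree ≤ n ∧ q.natDegree ≤ n ∧
        r.natDegree ≤ n - 1 ∧ s.natDegree ≤ n - 1 ∧
        ∀ t : ℝ, ξ.eval t =
          ((p.eval t) ^ 2 + (q.eval t) ^ 2) +
            (b - t) * (t - a) * ((r.eval t) ^ 2 + (s.eval t) ^ 2) := by
  constructor
  · intro hnn
    obtain ⟨σ, τ, hσ, hτ, hσd, hτd, rfl⟩ := (hasLukacsRepr_of_nonneg_on_Icc hab hnn n).1 hdeg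
    obtain ⟨p, q, hp, hq, rfl⟩ := exists_eq_sq_add_sq_of_nonneg_s10 hσ
    obtain ⟨r, s, hr, hs, rfl⟩ := exists_eq_sq_add_sq_of_nonneg_s10 hτ
    have hτd' : (r ^ 2 + s ^ 2).natDegree ≤ 2 * n - 2 := by
      rcases hτd with h | h
      · simp [h]
      · omega
    refine ⟨p, q, r, s, by omega, by omega, by omega, by omega, fun t => ?_⟩
    simp only [eval_add, eval_mul, eval_pow, eval_sub, eval_C, eval_X]
  · rintro ⟨p, q, r, s, -, -, -, -, hev⟩ t ht
    have : 0 ≤ (b - t) * (t - a) := mul_nonneg (sub_nonneg.2 ht.2) (sub_nonneg.2 ht.1)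
    rw [hev t]
    positivity
end
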